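/- Let θ be an irrational real number. For every n ≥ 1 and every real number γ, there exist positive integers k and l such that |e^{2πi k θ} − 1| < 1/n and |e^{2πi k N l θ} − e^{2πi γ}| < 1/n, where N ≥ 1 is any fixed integer. -/

import Mathlib

/-!
Multiples of an irrational `α` are dense in `ℝ/ℤ`; since the circle is a compact group, the
positive multiples `l • α` alone already accumulate at every point. Applied to `θ` at `0` this
gives `k`, and applied to the irrational number `k N θ` at `γ` it gives `l`.
-/

open Complex Filter

theorem AddCircle.mapClusterPt_nsmul_of_irrational {p : ℝ} [Fact (0 < p)] {α : ℝ}
    (hα : Irrational (α / p)) (x : AddCircle p) :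
    MapClusterPt x atTop (fun l : ℕ ↦ l • (α : AddCircle p)) := by
  rw [mapClusterPt_atTop_nsmul_iff_mem_topologicalClosure_zmultiples]
  exact AddCircle.denseRange_zsmul_coe_iff.2 hα x

theorem mapClusterPt_cexp_nat_mul_of_irrational {α : ℝ} (hα : Irrational α) (γ : ℝ) :
    MapClusterPt (cexp (2 * Real.pi * I * γ)) atTop
      (fun l : ℕ ↦ cexp (2 * Real.pi * I * l * α)) := by
  have hcont : Continuous fun t : UnitAddCircle ↦ (AddCircle.toCircle t : ℂ) :=
    continuous_subtype_val.comp AddCircle.continuous_toCircle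
  have hexp (t : ℝ) :
      (AddCircle.toCircle (t : UnitAddCircle) : ℂ) = cexp (2 * Real.pi * I * t) := by
    rw [AddCircle.toCircle_apply_mk, Circle.coe_exp]
    push_cast
    ring_nf
  convert (AddCircle.mapClusterPt_nsmul_of_irrational (p := 1) (by simpa using hα)
    γ).continuousAt_comp hcont.continuousAt using 1
  · exact (hexp γ).symm
  · ext l
    simp only [Function.comp_apply, ← AddCircle.coe_nsmul, nsmul_eq_mul, hexp]
    push_cast
    ring_nf

theorem exists_pos_norm_cexp_nat_mul_sub_lt {α : ℝ} (hα : Irrational α) (γ : ℝ) {ε : ℝ}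
    (hε : 0 < ε) :
    ∃ l : ℕ, 0 < l ∧ ‖cexp (2 * Real.pi * I * l * α) - cexp (2 * Real.pi * I * γ)‖ < ε := by
  have hfreq := (mapClusterPt_cexp_nat_mul_of_irrational hα γ).frequently
    (Metric.ball_mem_nhds _ hε)
  obtain ⟨l, hball, hl⟩ := (hfreq.and_eventually (eventually_gt_atTop 0)).exists
  exact ⟨l, hl, by simpa [dist_eq_norm] using hball⟩

theorem exists_k_l_rotation_approx (θ : ℝ) (hθ : Irrational θ) (N : ℕ) (hN : 1 ≤ N)
    (n : ℕ) (hn : 1 ≤ n) (γ : ℝ) :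
    ∃ k l : ℕ, 0 < k ∧ 0 < l ∧
      ‖Complex.exp (2 * Real.pi * I * k * θ) - 1‖ < 1 / n ∧
      ‖Complex.exp (2 * Real.pi * I * k * N * l * θ) - Complex.exp (2 * Real.pi * I * γ)‖
        < 1 / n := by
  have hε : (0 : ℝ) < 1 / n := by positivity
  obtain ⟨k, hk, hk_close⟩ := exists_pos_norm_cexp_nat_mul_sub_lt hθ 0 hε
  have hkN : Irrational (((k * N : ℕ) : ℝ) * θ) := hθ.natCast_mul (by positivity)
  obtain ⟨l, hl, hl_close⟩ := exists_pos_norm_cexp_nat_mul_sub_lt hkN γ hε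
  refine ⟨k, l, hk, hl, by simpa using hk_close, ?_⟩
  convert hl_close using 4
  push_cast
  ring
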